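/- Let f : [0, ∞) → ℝ be a bounded function with f(0)=0 and define Y, Ŷ, and their running suprema as for the drawdown/rally processes of f. Fix a ≥ b > 0, let τ_a = inf{t : Y_t > a} and τ̂_b = inf{t : Ŷ_t > b}, and suppose τ̂_b < ∞ with Ŷ_{τ̂_b} = sup_{s ≤ τ̂_b} Ŷ_s = b. Then τ_a < τ̂_b if and only if Y_{τ̂_b} > a − b. -/

import Mathlib

/-!
Since `Y_t + Ŷ_t` is the range `sup_{[0,t]} f - inf_{[0,t]} f` and `Ŷ_{τ̂_b} = b`, the condition
`Y_{τ̂_b} > a - b` says that the range of `f` on `[0, τ̂_b]` exceeds `a`. A drawdown above `a`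
before `τ̂_b` forces this, as drawdowns never exceed the range. Conversely, take a near-minimum
`f u` of `f` on `[0, τ̂_b]` and a point `s` with `f s - f u > a`: the point `s` cannot precede `u`,
for then the rally at `s` would exceed `a ≥ b`; so the drawdown at `u < τ̂_b` exceeds `a`.
-/

open Set Bornology

noncomputable section

namespace Drawdown

def drawdown (f : ℝ → ℝ) (t : ℝ) : ℝ := sSup (f '' Icc 0 t) - f t

def rally (f : ℝ → ℝ) (t : ℝ) : ℝ := f t - sInf (f '' Icc 0 t)

def runningRange (f : ℝ → ℝ) (t : ℝ) : ℝ := sSup (f '' Icc 0 t) - sInf (f '' Icc 0 t)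

theorem drawdown_add_rally (f : ℝ → ℝ) (t : ℝ) :
    drawdown f t + rally f t = runningRange f t := by
  unfold drawdown rally runningRange
  ring

variable {f : ℝ → ℝ} {s t : ℝ}

theorem isBounded_image_Icc (hf : IsBounded (f '' Ici 0)) (t : ℝ) :
    IsBounded (f '' Icc 0 t) :=
  hf.subset (image_mono Icc_subset_Ici_self)

theorem sub_le_drawdown (hf : IsBounded (f '' Ici 0)) (hs : s ∈ Icc 0 t) :
    f s - f t ≤ drawdown f t :=
  sub_le_sub_right (le_csSup (isBounded_image_Icc hf t).bddAbove (mem_image_of_mem f hs)) _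

theorem sub_le_rally (hf : IsBounded (f '' Ici 0)) (hs : s ∈ Icc 0 t) :
    f t - f s ≤ rally f t :=
  sub_le_sub_left (csInf_le (isBounded_image_Icc hf t).bddBelow (mem_image_of_mem f hs)) _

theorem drawdown_nonneg (hf : IsBounded (f '' Ici 0)) (ht : 0 ≤ t) : 0 ≤ drawdown f t := by
  simpa using sub_le_drawdown hf ⟨ht, le_rfl⟩

theorem rally_nonneg (hf : IsBounded (f '' Ici 0)) (ht : 0 ≤ t) : 0 ≤ rally f t := by
  simpa using sub_le_rally hf ⟨ht, le_rfl⟩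

theorem runningRange_mono (hf : IsBounded (f '' Ici 0)) (hs : 0 ≤ s) (hst : s ≤ t) :
    runningRange f s ≤ runningRange f t := by
  have hsub : f '' Icc 0 s ⊆ f '' Icc 0 t := image_mono (Icc_subset_Icc_right hst)
  have hne : (f '' Icc 0 s).Nonempty := (nonempty_Icc.2 hs).image f
  exact sub_le_sub (csSup_le_csSup (isBounded_image_Icc hf t).bddAbove hne hsub)
    (csInf_le_csInf (isBounded_image_Icc hf t).bddBelow hne hsub)

theorem drawdown_le_runningRange (hf : IsBounded (f '' Ici 0)) (hs : s ∈ Icc 0 t) :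
    drawdown f s ≤ runningRange f t := by
  have := drawdown_add_rally f s
  linarith [rally_nonneg hf hs.1, runningRange_mono hf hs.1 hs.2]

theorem rally_le_runningRange (hf : IsBounded (f '' Ici 0)) (hs : s ∈ Icc 0 t) :
    rally f s ≤ runningRange f t := by
  have := drawdown_add_rally f s
  linarith [drawdown_nonneg hf hs.1, runningRange_mono hf hs.1 hs.2]

theorem exists_drawdown_gt_of_lt_runningRange {a b T : ℝ} (hf : IsBounded (f '' Ici 0))
    (hT : 0 ≤ T) (hrally : ∀ s ∈ Icc 0 T, rally f s ≤ b) (hab : b ≤ a) (hpos : 0 < rally f T)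
    (hrange : a < runningRange f T) : ∃ u ∈ Ico 0 T, a < drawdown f u := by
  have hne : (f '' Icc 0 T).Nonempty := (nonempty_Icc.2 hT).image f
  unfold rally at hpos
  unfold runningRange at hrange
  obtain ⟨_, ⟨u, hu, rfl⟩, hfu⟩ :=
    exists_lt_of_csInf_lt hne (lt_min (sub_pos.1 hpos) (lt_sub_comm.1 hrange))
  obtain ⟨_, ⟨s, hs, rfl⟩, hfs⟩ :=
    exists_lt_of_lt_csSup hne (lt_sub_iff_add_lt.1 (lt_min_iff.1 hfu).2)
  have hsu : s < u := by
    by_contra! hus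
    linarith [hrally s hs, sub_le_rally hf ⟨hu.1, hus⟩]
  have huT : u ≠ T := by
    rintro rfl
    exact (lt_min_iff.1 hfu).1.false
  exact ⟨u, ⟨hu.1, hu.2.lt_of_ne huT⟩, by linarith [sub_le_drawdown hf ⟨hs.1, hsu.le⟩]⟩

end Drawdown

theorem ENNReal.iInf_ofReal_lt_ofReal_iff {S : Set ℝ} (hS : ∀ t ∈ S, 0 ≤ t) {T : ℝ} :
    (⨅ t ∈ S, ENNReal.ofReal t) < ENNReal.ofReal T ↔ ∃ t ∈ S, t < T := by
  simp only [iInf_lt_iff, ENNReal.ofReal_lt_ofReal_iff', exists_prop]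
  exact exists_congr fun t ↦ ⟨fun ⟨htS, htT, _⟩ ↦ ⟨htS, htT⟩,
    fun ⟨htS, htT⟩ ↦ ⟨htS, htT, (hS t htS).trans_lt htT⟩⟩

end

open Drawdown

open Real

theorem stmt8_general (f : ℝ → ℝ)
    (hbdd : ∃ C : ℝ, ∀ s : ℝ, 0 ≤ s → |f s| ≤ C)
    (Y Yh : ℝ → ℝ)
    (hY : ∀ t, Y t = sSup (f '' Set.Icc (0:ℝ) t) - f t)
    (hYh : ∀ t, Yh t = f t - sInf (f '' Set.Icc (0:ℝ) t))
    (a b : ℝ) (hb : 0 < b) (hab : b ≤ a)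
    (taub : ℝ)
    (h1 : Yh taub = b)
    (h2 : sSup (Yh '' Set.Icc (0:ℝ) taub) = b) :
    (⨅ t ∈ {t : ℝ | 0 ≤ t ∧ Y t > a}, ENNReal.ofReal t) < ENNReal.ofReal taub
      ↔ Y taub > a - b := by
  obtain rfl : Y = drawdown f := funext hY
  obtain rfl : Yh = rally f := funext hYh
  have hf : IsBounded (f '' Ici 0) := by
    obtain ⟨C, hC⟩ := hbdd
    exact isBounded_iff_forall_norm_le.2 ⟨C, by rintro _ ⟨s, hs, rfl⟩; exact hC s hs⟩
  -- on an empty interval `sSup` is `0`, which `h2` and `0 < b` rule out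
  have htaub : 0 ≤ taub := by
    by_contra! h
    rw [Icc_eq_empty_of_lt h, image_empty, Real.sSup_empty] at h2
    exact hb.ne h2
  have hrally : ∀ s ∈ Icc 0 taub, rally f s ≤ b := fun s hs ↦
    h2 ▸ le_csSup ⟨runningRange f taub, forall_mem_image.2 fun _ hu ↦ rally_le_runningRange hf hu⟩
      (mem_image_of_mem _ hs)
  have hrange : drawdown f taub + b = runningRange f taub := h1 ▸ drawdown_add_rally f taub
  rw [ENNReal.iInf_ofReal_lt_ofReal_iff fun t ht ↦ ht.1]
  constructor
  · rintro ⟨t, ⟨ht, hYt⟩, htT⟩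
    linarith [drawdown_le_runningRange hf ⟨ht, htT.le⟩]
  · intro hY
    obtain ⟨u, hu, hYu⟩ := exists_drawdown_gt_of_lt_runningRange hf htaub hrally hab
      (h1 ▸ hb) (by linarith)
    exact ⟨u, ⟨hu.1, hYu⟩, hu.2⟩

theorem stmt8 (f : ℝ → ℝ)
    (hbdd : ∃ C : ℝ, ∀ s : ℝ, 0 ≤ s → |f s| ≤ C) (hf0 : f 0 = 0)
    (Y Yh : ℝ → ℝ)
    (hY : ∀ t, Y t = sSup (f '' Set.Icc (0:ℝ) t) - f t)
    (hYh : ∀ t, Yh t = f t - sInf (f '' Set.Icc (0:ℝ) t))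
    (a b : ℝ) (hb : 0 < b) (hab : b ≤ a)
    (taub : ℝ) (htaub : taub = sInf {t : ℝ | 0 ≤ t ∧ Yh t > b})
    (hne : {t : ℝ | 0 ≤ t ∧ Yh t > b}.Nonempty)
    (h1 : Yh taub = b)
    (h2 : sSup (Yh '' Set.Icc (0:ℝ) taub) = b) :
    (⨅ t ∈ {t : ℝ | 0 ≤ t ∧ Y t > a}, ENNReal.ofReal t) < ENNReal.ofReal taub
      ↔ Y taub > a - b :=
  stmt8_general f hbdd Y Yh hY hYh a b hb hab taub h1 h2
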